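/- arXiv:1908.02645 — 3 statements merged into one kernel-verified Lean document; each statement's English description precedes it below -/
import Mathlib

section
/- If two points p, q in ℝ^d satisfy ‖p - q‖₂ ≤ 2^i, and we consider an axis-aligned grid with cell width R = 2·√d·2^i shifted by a uniformly random offset in [0,R)^d, then the probability that p and q lie in different grid cells is at most 1/2. -/
open MeasureTheory


private lemma oneD_le (R a b : ℝ) (hR : 0 < R) (hab : a ≤ b) (hba : b - a ≤ R) :
    volume {t : ℝ | t ∈ Set.Ico 0 R ∧ ⌊(a - t) / R⌋ ≠ ⌊(b - t) / R⌋}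
      ≤ ENNReal.ofReal (b - a) := by
  set m1 : ℤ := ⌊b / R⌋ with hm1
  set c : ℝ := a - m1 * R with hc
  set d0 : ℝ := b - m1 * R with hd0
  have hd0_nonneg : 0 ≤ d0 := Int.sub_floor_div_mul_nonneg b hR
  have hsub : {t : ℝ | t ∈ Set.Ico 0 R ∧ ⌊(a - t) / R⌋ ≠ ⌊(b - t) / R⌋}
      ⊆ Set.Icc (max c 0) d0 ∪ Set.Icc (c + R) R := by
    rintro t ⟨⟨ht0, htR⟩, hne⟩
    have hle : ⌊(a - t) / R⌋ ≤ ⌊(b - t) / R⌋ :=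
      Int.floor_le_floor (by gcongr)
    have key : (b - t) / R ≤ (a - t) / R + 1 := by
      rw [div_le_iff₀ hR, add_mul, div_mul_cancel₀ _ hR.ne', one_mul]; linarith
    have hle2 : ⌊(b - t) / R⌋ ≤ ⌊(a - t) / R⌋ + 1 := by
      calc ⌊(b - t) / R⌋ ≤ ⌊(a - t) / R + 1⌋ := Int.floor_le_floor key
        _ = ⌊(a - t) / R⌋ + 1 := by rw [Int.floor_add_one]
    have hfb : ⌊(b - t) / R⌋ = ⌊(a - t) / R⌋ + 1 := by omega
    set m : ℤ := ⌊(b - t) / R⌋ with hm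
    have h1 : (m : ℝ) * R ≤ b - t := (le_div_iff₀ hR).mp (Int.floor_le _)
    have h2 : a - t < (m : ℝ) * R := by
      have := Int.lt_floor_add_one ((a - t) / R)
      have h' : (a - t) / R < (m : ℝ) := by
        rw [hfb]; push_cast; linarith
      exact (div_lt_iff₀ hR).mp h'
    have hm_le : m ≤ m1 := by
      apply Int.le_floor.mpr
      rw [le_div_iff₀ hR]
      linarith
    have hm_ge : m1 ≤ m + 1 := by
      have hb2 : b / R < (m : ℝ) + 2 := by
        rw [div_lt_iff₀ hR]; nlinarith
      have := Int.floor_le (b / R)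
      have : (m1 : ℝ) < (m : ℝ) + 2 := lt_of_le_of_lt this hb2
      have : m1 < m + 2 := by exact_mod_cast this
      omega
    have hcase : m = m1 - 1 ∨ m = m1 := by omega
    rcases hcase with heq | heq
    · right
      rw [heq] at h2
      push_cast at h2
      constructor
      · have : c + R = a - (m1 - 1 : ℝ) * R := by rw [hc]; ring
        rw [this]; linarith
      · linarith
    · left
      rw [heq] at h1 h2
      constructor
      · exact max_le (by rw [hc]; linarith) ht0
      · rw [hd0]; linarith
  calc volume {t : ℝ | t ∈ Set.Ico 0 R ∧ ⌊(a - t) / R⌋ ≠ ⌊(b - t) / R⌋}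
      ≤ volume (Set.Icc (max c 0) d0 ∪ Set.Icc (c + R) R) := measure_mono hsub
    _ ≤ volume (Set.Icc (max c 0) d0) + volume (Set.Icc (c + R) R) := measure_union_le _ _
    _ = ENNReal.ofReal (d0 - max c 0) + ENNReal.ofReal (R - (c + R)) := by
        rw [Real.volume_Icc, Real.volume_Icc]
    _ ≤ ENNReal.ofReal (b - a) := by
        rcases le_total 0 c with h | h
        · rw [max_eq_left h]
          have h2 : R - (c + R) ≤ 0 := by linarith
          rw [ENNReal.ofReal_eq_zero.mpr h2, add_zero]
          exact ENNReal.ofReal_le_ofReal (by simp only [hc, hd0]; linarith)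
        · rw [max_eq_right h, ← ENNReal.ofReal_add (by linarith) (by linarith)]
          exact ENNReal.ofReal_le_ofReal (by simp only [hc, hd0]; linarith)

/-- If two points `p, q ∈ ℝ^d` satisfy `‖p - q‖₂ ≤ 2^i` and we consider an axis-aligned
grid with cell width `R = 2·√d·2^i`, shifted by a uniformly random offset `s ∈ [0,R)^d`
(a point `x` lies in the cell `(⌊(x j - s j)/R⌋)_j`), then the probability that `p` and `q`
lie in different grid cells is at most `1/2`. -/
theorem grid_separation_prob_half (d : ℕ) (hd : 0 < d) (i : ℤ)
    (p q : EuclideanSpace ℝ (Fin d)) (hpq : dist p q ≤ 2 ^ i)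
    (R : ℝ) (hR : R = 2 * Real.sqrt d * 2 ^ i) :
    volume {s : EuclideanSpace ℝ (Fin d) |
        (∀ j, s j ∈ Set.Ico (0 : ℝ) R) ∧
        ∃ j, ⌊(p j - s j) / R⌋ ≠ ⌊(q j - s j) / R⌋}
      ≤ (1 / 2) * volume {s : EuclideanSpace ℝ (Fin d) | ∀ j, s j ∈ Set.Ico (0 : ℝ) R} := by
  have h2i : (0:ℝ) < 2 ^ i := zpow_pos (by norm_num) i
  have hsd : (1:ℝ) ≤ Real.sqrt d := by
    rw [show (1:ℝ) = Real.sqrt 1 by simp]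
    exact Real.sqrt_le_sqrt (by exact_mod_cast hd)
  have hRpos : 0 < R := by rw [hR]; positivity
  have h2iR : (2:ℝ) ^ i ≤ R := by rw [hR]; nlinarith
  have hmp := EuclideanSpace.volume_preserving_symm_measurableEquiv_toLp (Fin d)
  set A : Fin d → Set ℝ := fun j =>
    {t : ℝ | t ∈ Set.Ico 0 R ∧ ⌊(p j - t) / R⌋ ≠ ⌊(q j - t) / R⌋} with hA
  -- coordinate distance bound
  have hdist : Real.sqrt (∑ j, (p j - q j)^2) = dist p q := by
    rw [EuclideanSpace.dist_eq]
    congr 1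
    exact Finset.sum_congr rfl fun j _ => by rw [Real.dist_eq, sq_abs]
  have hcoord : ∀ j, |p j - q j| ≤ dist p q := by
    intro j
    rw [← hdist, ← Real.sqrt_sq_eq_abs]
    exact Real.sqrt_le_sqrt (Finset.single_le_sum (f := fun k => (p k - q k)^2) (fun k _ => sq_nonneg _) (Finset.mem_univ j))
  -- 1D bounds
  have hAle : ∀ j, volume (A j) ≤ ENNReal.ofReal |p j - q j| := by
    intro j
    have hd1 : |p j - q j| ≤ R := (hcoord j).trans (hpq.trans h2iR)
    rcases le_total (p j) (q j) with h | h
    · have := oneD_le R (p j) (q j) hRpos h (by rw [abs_sub_comm] at hd1; rwa [abs_of_nonneg (by linarith)] at hd1)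
      rw [abs_sub_comm, abs_of_nonneg (by linarith)]
      exact this
    · have hd1' : p j - q j ≤ R := by rwa [abs_of_nonneg (by linarith)] at hd1
      have := oneD_le R (q j) (p j) hRpos h (by linarith)
      rw [abs_of_nonneg (by linarith)]
      refine le_trans (le_of_eq ?_) this
      congr 1
      ext t
      exact and_congr Iff.rfl ne_comm
  -- sum bound
  have hsum : ∑ j, |p j - q j| ≤ R / 2 := by
    have h1 : (∑ j, |p j - q j|)^2 ≤ (d:ℝ) * ∑ j, (p j - q j)^2 := by
      calc (∑ j, |p j - q j|)^2 ≤ (Finset.univ.card : ℝ) * ∑ j, |p j - q j|^2 :=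
            sq_sum_le_card_mul_sum_sq
        _ = (d:ℝ) * ∑ j, (p j - q j)^2 := by simp [sq_abs, Finset.card_univ]
    calc ∑ j, |p j - q j|
        ≤ Real.sqrt ((d:ℝ) * ∑ j, (p j - q j)^2) := by
          rw [← Real.sqrt_sq (Finset.sum_nonneg fun j _ => abs_nonneg _)]
          exact Real.sqrt_le_sqrt h1
      _ = Real.sqrt d * dist p q := by rw [Real.sqrt_mul (Nat.cast_nonneg d), hdist]
      _ ≤ Real.sqrt d * 2^i := by
          exact mul_le_mul_of_nonneg_left hpq (Real.sqrt_nonneg _)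
      _ = R / 2 := by rw [hR]; ring
  -- transfer both sets to pi space
  have key : volume {s : EuclideanSpace ℝ (Fin d) |
        (∀ j, s j ∈ Set.Ico (0 : ℝ) R) ∧
        ∃ j, ⌊(p j - s j) / R⌋ ≠ ⌊(q j - s j) / R⌋}
      = volume {f : Fin d → ℝ |
        (∀ j, f j ∈ Set.Ico (0 : ℝ) R) ∧
        ∃ j, ⌊(p j - f j) / R⌋ ≠ ⌊(q j - f j) / R⌋} := by
    rw [← hmp.measure_preimage_equiv]
    rfl
  have keybox : volume {s : EuclideanSpace ℝ (Fin d) | ∀ j, s j ∈ Set.Ico (0 : ℝ) R}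
      = volume (Set.univ.pi fun _ : Fin d => Set.Ico (0:ℝ) R) := by
    rw [← hmp.measure_preimage_equiv]
    congr 1
    ext s
    simp [Set.mem_pi]
  have hboxvol : volume (Set.univ.pi fun _ : Fin d => Set.Ico (0:ℝ) R)
      = ENNReal.ofReal R ^ d := by
    rw [volume_pi_pi]
    simp [Real.volume_Ico]
  -- union bound
  have hsubU : {f : Fin d → ℝ |
        (∀ j, f j ∈ Set.Ico (0 : ℝ) R) ∧
        ∃ j, ⌊(p j - f j) / R⌋ ≠ ⌊(q j - f j) / R⌋}
      ⊆ ⋃ j, Set.univ.pi (Function.update (fun _ => Set.Ico (0:ℝ) R) j (A j)) := by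
    rintro f ⟨hbox, j, hj⟩
    refine Set.mem_iUnion.mpr ⟨j, fun k _ => ?_⟩
    rcases eq_or_ne k j with rfl | hk
    · rw [Function.update_self]; exact ⟨hbox k, hj⟩
    · rw [Function.update_of_ne hk]; exact hbox k
  have hvol_j : ∀ j, volume (Set.univ.pi (Function.update (fun _ => Set.Ico (0:ℝ) R) j (A j)))
      ≤ ENNReal.ofReal |p j - q j| * ENNReal.ofReal R ^ (d - 1) := by
    intro j
    rw [volume_pi_pi]
    rw [show (fun k => volume (Function.update (fun _ => Set.Ico (0:ℝ) R) j (A j) k))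
        = Function.update (fun _ => volume (Set.Ico (0:ℝ) R)) j (volume (A j)) from
      funext fun k => Function.apply_update (fun _ s => volume s) _ j (A j) k]
    rw [Finset.prod_update_of_mem (Finset.mem_univ j), Finset.sdiff_singleton_eq_erase]
    have herase : ∏ _k ∈ Finset.univ.erase j, volume (Set.Ico (0:ℝ) R)
        = ENNReal.ofReal R ^ (d-1) := by
      rw [Finset.prod_const, Real.volume_Ico, sub_zero,
        Finset.card_erase_of_mem (Finset.mem_univ j), Finset.card_univ, Fintype.card_fin]
    rw [herase]
    exact mul_le_mul_left (hAle j) _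
  rw [key, keybox, hboxvol]
  calc volume {f : Fin d → ℝ |
        (∀ j, f j ∈ Set.Ico (0 : ℝ) R) ∧
        ∃ j, ⌊(p j - f j) / R⌋ ≠ ⌊(q j - f j) / R⌋}
      ≤ volume (⋃ j, Set.univ.pi (Function.update (fun _ => Set.Ico (0:ℝ) R) j (A j))) :=
        measure_mono hsubU
    _ ≤ ∑ j, volume (Set.univ.pi (Function.update (fun _ => Set.Ico (0:ℝ) R) j (A j))) :=
        (measure_iUnion_le _).trans_eq (tsum_fintype _)
    _ ≤ ∑ j, ENNReal.ofReal |p j - q j| * ENNReal.ofReal R ^ (d-1) :=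
        Finset.sum_le_sum fun j _ => hvol_j j
    _ = ENNReal.ofReal (∑ j, |p j - q j|) * ENNReal.ofReal R ^ (d-1) := by
        rw [← Finset.sum_mul, ← ENNReal.ofReal_sum_of_nonneg (fun j _ => abs_nonneg _)]
    _ ≤ ENNReal.ofReal (R/2) * ENNReal.ofReal R ^ (d-1) :=
        mul_le_mul_left (ENNReal.ofReal_le_ofReal hsum) _
    _ = (1/2) * ENNReal.ofReal R ^ d := by
        rw [show R / 2 = (1/2) * R by ring, ENNReal.ofReal_mul (by norm_num),
          show ENNReal.ofReal (1/2) = 1/2 by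
            rw [ENNReal.ofReal_div_of_pos (by norm_num)]; norm_num,
          mul_assoc, ← pow_succ', Nat.sub_add_cancel hd]
end

section
/- For points p, q in ℝ^d and a grid of cell width R with shift s uniform on [0,R)^d, the probability that p and q lie in different grid cells is at most ‖p - q‖₁ / R. -/
/-!
In one coordinate, a shift `t` separates `a` and `b` exactly when some translate `t + k R`,
`k ∈ ℤ`, lies between `a` and `b`. Since `(0, R]` is a fundamental domain for the translations
by `R ℤ`, the shifts in `[0, R)` of this kind form a set of measure at most `|a - b|`. In `d`
dimensions, the shifts separating `p` and `q` in coordinate `j` form a product set, so their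
volume is at most `|p j - q j| / R` times that of the cube; a union bound over `j` finishes.
-/

open MeasureTheory Set
open scoped Pointwise

theorem Int.exists_intCast_mem_Ioc_of_floor_ne {α : Type*} [Field α] [LinearOrder α]
    [IsStrictOrderedRing α] [FloorRing α] {x y : α} (hxy : x ≤ y) (h : ⌊x⌋ ≠ ⌊y⌋) :
    ∃ k : ℤ, (k : α) ∈ Ioc x y :=
  ⟨⌊y⌋, Int.floor_lt.mp ((Int.floor_mono hxy).lt_of_ne h), Int.floor_le y⟩

theorem exists_add_int_mul_mem_uIoc_of_floor_ne {R : ℝ} (hR : 0 < R) {a b t : ℝ}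
    (h : ⌊(a - t) / R⌋ ≠ ⌊(b - t) / R⌋) : ∃ k : ℤ, t + k * R ∈ uIoc a b := by
  wlog hab : a ≤ b generalizing a b
  · rw [uIoc_comm]
    exact this h.symm (le_of_not_ge hab)
  obtain ⟨k, hk⟩ := Int.exists_intCast_mem_Ioc_of_floor_ne (by gcongr) h
  rw [mem_Ioc, div_lt_iff₀ hR, le_div_iff₀ hR] at hk
  refine ⟨k, ?_⟩
  rw [uIoc_of_le hab, mem_Ioc]
  constructor <;> linarith [hk.1, hk.2]

theorem volume_Ico_inter_floor_ne_le {R : ℝ} (hR : 0 < R) (a b : ℝ) :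
    volume (Ico 0 R ∩ {t | ⌊(a - t) / R⌋ ≠ ⌊(b - t) / R⌋}) ≤
      ENNReal.ofReal (|a - b| / R) * volume (Ico 0 R) := by
  have hsub : {t | ⌊(a - t) / R⌋ ≠ ⌊(b - t) / R⌋} ⊆
      ⋃ g : AddSubgroup.zmultiples R, g +ᵥ uIoc a b := by
    intro t ht
    obtain ⟨k, hk⟩ := exists_add_int_mul_mem_uIoc_of_floor_ne hR ht
    refine mem_iUnion.mpr ⟨-⟨k * R, k, zsmul_eq_mul R k⟩, ?_⟩
    rw [mem_vadd_set_iff_neg_vadd_mem, neg_neg]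
    simpa [AddSubgroup.vadd_def, add_comm] using hk
  have hdom := isAddFundamentalDomain_Ioc hR 0
  rw [zero_add] at hdom
  calc volume (Ico 0 R ∩ {t | ⌊(a - t) / R⌋ ≠ ⌊(b - t) / R⌋})
      ≤ volume ((⋃ g : AddSubgroup.zmultiples R, g +ᵥ uIoc a b) ∩ Ico 0 R) := by
        rw [inter_comm]
        exact measure_mono (inter_subset_inter_left _ hsub)
    _ = volume (⋃ g : AddSubgroup.zmultiples R, (g +ᵥ uIoc a b) ∩ Ioc 0 R) := by
        rw [← iUnion_inter]
        exact measure_congr ((ae_eq_refl _).inter Ico_ae_eq_Ioc)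
    _ ≤ ∑' g : AddSubgroup.zmultiples R, volume ((g +ᵥ uIoc a b) ∩ Ioc 0 R) :=
        measure_iUnion_le _
    _ = ENNReal.ofReal (|a - b| / R) * volume (Ico 0 R) := by
        rw [← hdom.measure_eq_tsum, Real.volume_uIoc, Real.volume_Ico, sub_zero,
          ← ENNReal.ofReal_mul (by positivity), div_mul_cancel₀ _ hR.ne', abs_sub_comm]

theorem MeasureTheory.Measure.pi_univ_pi_update_le {ι : Type*} [Fintype ι] [DecidableEq ι]
    {α : ι → Type*} [∀ i, MeasurableSpace (α i)] (μ : ∀ i, Measure (α i))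
    [∀ i, SigmaFinite (μ i)] (s : ∀ i, Set (α i)) (j : ι) (t : Set (α j)) (c : ENNReal)
    (h : μ j t ≤ c * μ j (s j)) :
    Measure.pi μ (univ.pi (Function.update s j t)) ≤ c * Measure.pi μ (univ.pi s) := by
  rw [Measure.pi_pi, Measure.pi_pi, ← Finset.mul_prod_erase _ _ (Finset.mem_univ j),
    ← Finset.mul_prod_erase _ _ (Finset.mem_univ j), Function.update_self, ← mul_assoc]
  gcongr with i hi
  rw [Function.update_of_ne (Finset.ne_of_mem_erase hi)]

theorem volume_grid_separation_le {ι : Type*} [Fintype ι] {R : ℝ} (hR : 0 < R) (p q : ι → ℝ) :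
    volume {s : ι → ℝ | (∀ j, s j ∈ Ico 0 R) ∧ ∃ j, ⌊(p j - s j) / R⌋ ≠ ⌊(q j - s j) / R⌋}
      ≤ ENNReal.ofReal ((∑ j, |p j - q j|) / R) * volume {s : ι → ℝ | ∀ j, s j ∈ Ico 0 R} := by
  classical
  set box : ι → Set ℝ := fun _ => Ico 0 R
  have hbox : {s : ι → ℝ | ∀ j, s j ∈ Ico 0 R} = univ.pi box := by ext; simp [box]
  have hsub : {s : ι → ℝ | (∀ j, s j ∈ Ico 0 R) ∧ ∃ j, ⌊(p j - s j) / R⌋ ≠ ⌊(q j - s j) / R⌋} ⊆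
      ⋃ j, univ.pi (Function.update box j (Ico 0 R ∩ {t | ⌊(p j - t) / R⌋ ≠ ⌊(q j - t) / R⌋})) := by
    rintro s ⟨hs, j, hj⟩
    refine mem_iUnion.mpr ⟨j, fun i _ => ?_⟩
    rcases eq_or_ne i j with rfl | hij
    · simpa using ⟨hs i, hj⟩
    · simpa [hij, box] using hs i
  rw [hbox]
  calc _ ≤ ∑ j, volume (univ.pi
        (Function.update box j (Ico 0 R ∩ {t | ⌊(p j - t) / R⌋ ≠ ⌊(q j - t) / R⌋}))) :=
        (measure_mono hsub).trans (measure_iUnion_fintype_le _ _)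
    _ ≤ ∑ j, ENNReal.ofReal (|p j - q j| / R) * volume (univ.pi box) := by
        gcongr with j
        rw [volume_pi]
        exact Measure.pi_univ_pi_update_le _ _ _ _ _ (volume_Ico_inter_floor_ne_le hR _ _)
    _ = _ := by
        rw [← Finset.sum_mul, ← ENNReal.ofReal_sum_of_nonneg (fun j _ => by positivity),
          Finset.sum_div]

theorem grid_separation_prob_l1_general (d : ℕ) (R : ℝ) (hRpos : 0 < R)
    (p q : EuclideanSpace ℝ (Fin d)) :
    volume {s : EuclideanSpace ℝ (Fin d) |
        (∀ j, s j ∈ Set.Ico (0 : ℝ) R) ∧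
        ∃ j, ⌊(p j - s j) / R⌋ ≠ ⌊(q j - s j) / R⌋}
      ≤ ENNReal.ofReal ((∑ j, |p j - q j|) / R) *
        volume {s : EuclideanSpace ℝ (Fin d) | ∀ j, s j ∈ Set.Ico (0 : ℝ) R} := by
  have e := EuclideanSpace.volume_preserving_symm_measurableEquiv_toLp (Fin d)
  have := volume_grid_separation_le hRpos p.ofLp q.ofLp
  rwa [← e.measure_preimage_equiv, ← e.measure_preimage_equiv] at this

/-- For points `p, q ∈ ℝ^d` and an axis-aligned grid of cell width `R > 0` with shift `s`
uniform on `[0,R)^d` (a point `x` lies in the cell `(⌊(x j - s j)/R⌋)_j`), the probability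
that `p` and `q` lie in different grid cells is at most `‖p - q‖₁ / R`. -/
theorem grid_separation_prob_l1 (d : ℕ) (hd : 0 < d) (R : ℝ) (hRpos : 0 < R)
    (p q : EuclideanSpace ℝ (Fin d)) :
    volume {s : EuclideanSpace ℝ (Fin d) |
        (∀ j, s j ∈ Set.Ico (0 : ℝ) R) ∧
        ∃ j, ⌊(p j - s j) / R⌋ ≠ ⌊(q j - s j) / R⌋}
      ≤ ENNReal.ofReal ((∑ j, |p j - q j|) / R) *
        volume {s : EuclideanSpace ℝ (Fin d) | ∀ j, s j ∈ Set.Ico (0 : ℝ) R} :=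
  grid_separation_prob_l1_general d R hRpos p q
end

section
/- Let G be a finite graph on a point set P where distinct x, y are adjacent iff dist(x,y) ≤ 2τ, and let I be a maximal independent set in G. If |I| ≤ k, then assigning each point of P to a nearest point of I gives a k-center solution with cost_cen(P, I) ≤ 2τ. Conversely, if opt_cen^k(P) ≤ τ, then |I| ≤ k. -/
/-- `𝒟` is a partition of the finite point set `P` into clusters. -/
def IsPartitionOf {X : Type*} (P : Finset X) (𝒟 : Finset (Finset X)) : Prop :=
  (∀ c ∈ 𝒟, c ⊆ P) ∧ (∀ c ∈ 𝒟, c.Nonempty) ∧ ∀ p ∈ P, ∃! c, c ∈ 𝒟 ∧ p ∈ c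

/-- `cost_diam(P,𝒟)`: the maximum diameter of a cluster of the partition `𝒟`. -/
noncomputable def costDiam {X : Type*} [MetricSpace X] (𝒟 : Finset (Finset X)) : ℝ :=
  sSup {r | ∃ c ∈ 𝒟, ∃ p ∈ c, ∃ q ∈ c, r = dist p q}

/-- `opt_diam^k(P)`: the optimal cost of a partition of `P` into at most `k` clusters. -/
noncomputable def optDiam {X : Type*} [MetricSpace X] (P : Finset X) (k : ℕ) : ℝ :=
  sInf {r | ∃ 𝒟 : Finset (Finset X), IsPartitionOf P 𝒟 ∧ 𝒟.card ≤ k ∧ r = costDiam 𝒟}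

/-- `cost_cen(P,C) = max_{p ∈ P} min_{c ∈ C} dist p c`. -/
noncomputable def costCen {X : Type*} [MetricSpace X] (P C : Finset X) : ℝ :=
  sSup {r | ∃ p ∈ P, r = sInf {s | ∃ c ∈ C, s = dist p c}}

/-- `opt_cen^k(P)`: the optimal k-center cost over center sets `C ⊆ P`, `|C| ≤ k`. -/
noncomputable def optCen {X : Type*} [MetricSpace X] (P : Finset X) (k : ℕ) : ℝ :=
  sInf {r | ∃ C : Finset X, C ⊆ P ∧ C.Nonempty ∧ C.card ≤ k ∧ r = costCen P C}

lemma nearest_set_eq {X : Type*} [MetricSpace X] (C : Finset X) (p : X) :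
    {s | ∃ c ∈ C, s = dist p c} = (fun c => dist p c) '' ↑C := by
  ext s; simp [eq_comm]

lemma costCen_set_eq {X : Type*} [MetricSpace X] (P C : Finset X) :
    {r | ∃ p ∈ P, r = sInf {s | ∃ c ∈ C, s = dist p c}} =
      (fun p => sInf {s | ∃ c ∈ C, s = dist p c}) '' ↑P := by
  ext r; simp [eq_comm]

/-- Hochbaum–Shmoys core: let `I ⊆ P` be a maximal independent set of the threshold graph
on `P` with edges between distinct points at distance `≤ 2τ`. Then every point of `P` has
a point of `I` within distance `2τ` (so `cost_cen(P,I) ≤ 2τ`), and if `opt_cen^k(P) ≤ τ`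
then `|I| ≤ k`. -/
theorem maximal_independent_set_two_approx
    {X : Type*} [MetricSpace X] (P I : Finset X) (k : ℕ) (hk : 1 ≤ k) (τ : ℝ) (hτ : 0 ≤ τ)
    (hIP : I ⊆ P) (hInonempty : I.Nonempty)
    (hindep : ∀ x ∈ I, ∀ y ∈ I, x ≠ y → ¬ dist x y ≤ 2 * τ)
    (hmax : ∀ p ∈ P, p ∉ I → ∃ c ∈ I, dist p c ≤ 2 * τ) :
    (∀ p ∈ P, ∃ c ∈ I, dist p c ≤ 2 * τ) ∧
    costCen P I ≤ 2 * τ ∧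
    (optCen P k ≤ τ → I.card ≤ k) := by
  have h1 : ∀ p ∈ P, ∃ c ∈ I, dist p c ≤ 2 * τ := by
    intro p hp
    by_cases h : p ∈ I
    · exact ⟨p, h, by simp; positivity⟩
    · exact hmax p hp h
  refine ⟨h1, ?_, ?_⟩
  · apply Real.sSup_le
    · rintro r ⟨p, hp, rfl⟩
      obtain ⟨c, hc, hd⟩ := h1 p hp
      refine le_trans (csInf_le ⟨0, ?_⟩ ⟨c, hc, rfl⟩) hd
      rintro s ⟨c', _, rfl⟩; exact dist_nonneg
    · positivity
  · intro hopt
    by_contra hcard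
    push_neg at hcard
    classical
    -- there exist two distinct points of I; take the minimum pairwise distance δ
    have hI2 : 2 ≤ I.card := by omega
    set Pr := (I ×ˢ I).filter (fun p => p.1 ≠ p.2) with hPr
    have hPrne : Pr.Nonempty := by
      obtain ⟨x, hx, y, hy, hxy⟩ := Finset.one_lt_card.mp (by omega : 1 < I.card)
      exact ⟨(x, y), by simp [hPr, hx, hy, hxy]⟩
    set D := Pr.image (fun p => dist p.1 p.2) with hD
    have hDne : D.Nonempty := hPrne.image _
    set δ := D.min' hDne with hδ
    have hδmem := D.min'_mem hDne
    have hδgt : 2 * τ < δ := by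
      obtain ⟨⟨x, y⟩, hxy, hd⟩ := Finset.mem_image.mp hδmem
      simp only [hPr, Finset.mem_filter, Finset.mem_product] at hxy
      have := hindep x hxy.1.1 y hxy.1.2 hxy.2
      rw [hδ, ← hd]
      exact lt_of_not_ge this
    -- every admissible center set has cost ≥ δ/2
    have key : ∀ r ∈ {r | ∃ C : Finset X, C ⊆ P ∧ C.Nonempty ∧ C.card ≤ k ∧ r = costCen P C},
        δ / 2 ≤ r := by
      rintro r ⟨C, hCP, hCne, hCk, rfl⟩
      -- for each x, nearest-center inf is attained
      have hatt : ∀ x : X, ∃ c ∈ C, sInf {s | ∃ c ∈ C, s = dist x c} = dist x c := by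
        intro x
        have hfin : {s | ∃ c ∈ C, s = dist x c}.Finite := by
          rw [nearest_set_eq]; exact C.finite_toSet.image _
        have hne : {s | ∃ c ∈ C, s = dist x c}.Nonempty :=
          ⟨dist x hCne.choose, hCne.choose, hCne.choose_spec, rfl⟩
        have := hne.csInf_mem hfin
        obtain ⟨c, hc, hc'⟩ := this
        exact ⟨c, hc, hc'⟩
      choose f hf hf' using fun x => hatt x
      -- pigeonhole
      obtain ⟨x, hx, y, hy, hxy, hfxy⟩ :=
        Finset.exists_ne_map_eq_of_card_lt_of_maps_to
          (lt_of_le_of_lt hCk hcard) (fun x _ => hf x)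
      -- each inf ≤ costCen P C
      have hbdd : BddAbove {r | ∃ p ∈ P, r = sInf {s | ∃ c ∈ C, s = dist p c}} := by
        rw [costCen_set_eq]; exact (P.finite_toSet.image _).bddAbove
      have hle : ∀ z ∈ I, sInf {s | ∃ c ∈ C, s = dist z c} ≤ costCen P C := by
        intro z hz
        exact le_csSup hbdd ⟨z, hIP hz, rfl⟩
      have hdx : dist x (f x) ≤ costCen P C := by rw [← hf' x]; exact hle x hx
      have hdy : dist y (f y) ≤ costCen P C := by rw [← hf' y]; exact hle y hy
      have hdist : dist x y ≤ 2 * costCen P C := by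
        have ht := dist_triangle x (f x) y
        rw [hfxy] at ht hdx
        have hc : dist (f y) y = dist y (f y) := dist_comm _ _
        linarith
      have hδle : δ ≤ dist x y := by
        apply Finset.min'_le
        rw [hD]
        exact Finset.mem_image.mpr ⟨(x, y), by simp [hPr, hx, hy, hxy], rfl⟩
      linarith
    have hne : {r | ∃ C : Finset X, C ⊆ P ∧ C.Nonempty ∧ C.card ≤ k ∧ r = costCen P C}.Nonempty := by
      obtain ⟨x0, hx0⟩ := hInonempty
      exact ⟨costCen P {x0}, {x0}, by simp [hIP hx0], Finset.singleton_nonempty _, by simpa, rfl⟩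
    have : δ / 2 ≤ optCen P k := le_csInf hne key
    linarith
end
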